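/- There exist reals r_1, …, r_12 ∈ [0,1] such that for every r* ∈ [0,1], min_{1 ≤ i ≤ 12} B(r_i, r*) ≤ 1.5402. -/
import Mathlib

/-- The PH3 bound function `B(r_L, r*)`:
`B(r_L, r*) = 3/2 + min{1/(4r*), 3/(6r*+2)}·(r* − r_L)` if `r* ≥ r_L`, and
`B(r_L, r*) = 3/2 + min{3/(4r*), 9/(6r*+2)}·(r_L − r*)` if `r* < r_L`, where the minima are
written out piecewise: the first equals `3/(6r*+2)` for `r* ≤ 1/3` and `1/(4r*)` for
`r* ≥ 1/3`, the second equals `9/(6r*+2)` for `r* ≤ 1/3` and `3/(4r*)` for `r* ≥ 1/3`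
(in particular, for `r* = 0` both minima are taken as the second expression). -/
noncomputable def Bfun (rL rs : ℝ) : ℝ :=
  if rL ≤ rs then
    3/2 + (if rs ≤ 1/3 then 3/(6*rs + 2) else 1/(4*rs)) * (rs - rL)
  else
    3/2 + (if rs ≤ 1/3 then 9/(6*rs + 2) else 3/(4*rs)) * (rL - rs)

lemma key1 {rL rs : ℝ} (hle : rL ≤ rs) (h3 : rs ≤ 1/3) (h0 : (0:ℝ) ≤ rs)
    (hlin : 3*(rs - rL) ≤ 0.0402*(6*rs+2)) : Bfun rL rs ≤ 1.5402 := by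
  have hpos : (0:ℝ) < 6*rs+2 := by linarith
  rw [Bfun, if_pos hle, if_pos h3]
  have : 3/(6*rs+2) * (rs - rL) ≤ 0.0402 := by
    rw [div_mul_eq_mul_div, div_le_iff₀ hpos]; nlinarith
  linarith

lemma key2 {rL rs : ℝ} (hle : rL ≤ rs) (h3 : ¬ rs ≤ 1/3)
    (hlin : rs - rL ≤ 0.1608*rs) : Bfun rL rs ≤ 1.5402 := by
  have hpos : (0:ℝ) < 4*rs := by push_neg at h3; linarith
  rw [Bfun, if_pos hle, if_neg h3]
  have : 1/(4*rs) * (rs - rL) ≤ 0.0402 := by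
    rw [div_mul_eq_mul_div, div_le_iff₀ hpos]; nlinarith
  linarith

lemma key3 {rL rs : ℝ} (hle : ¬ rL ≤ rs) (h3 : rs ≤ 1/3) (h0 : (0:ℝ) ≤ rs)
    (hlin : 9*(rL - rs) ≤ 0.0402*(6*rs+2)) : Bfun rL rs ≤ 1.5402 := by
  have hpos : (0:ℝ) < 6*rs+2 := by linarith
  rw [Bfun, if_neg hle, if_pos h3]
  have : 9/(6*rs+2) * (rL - rs) ≤ 0.0402 := by
    rw [div_mul_eq_mul_div, div_le_iff₀ hpos]; nlinarith
  linarith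

lemma key4 {rL rs : ℝ} (hle : ¬ rL ≤ rs) (h3 : ¬ rs ≤ 1/3)
    (hlin : 3*(rL - rs) ≤ 0.1608*rs) : Bfun rL rs ≤ 1.5402 := by
  have hpos : (0:ℝ) < 4*rs := by push_neg at h3; linarith
  rw [Bfun, if_neg hle, if_neg h3]
  have : 3/(4*rs) * (rL - rs) ≤ 0.0402 := by
    rw [div_mul_eq_mul_div, div_le_iff₀ hpos]; nlinarith
  linarith

set_option maxHeartbeats 1000000

/-- There exist parameters r_1, …, r_12 ∈ [0,1] such that for every r* ∈ [0,1] the best of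
the corresponding 12 parallel copies of PH3 has bound at most 1.5402. -/
theorem kcopy_PH3_bound :
    ∃ r : Fin 12 → ℝ, (∀ i, r i ∈ Set.Icc (0 : ℝ) 1) ∧
      ∀ rs ∈ Set.Icc (0 : ℝ) 1, ∃ i, Bfun (r i) rs ≤ 1.5402 := by
  refine ⟨![0, 19/500, 2/25, 16/125, 181/1000, 239/1000, 61/200, 351/1000, 11/25,
      69/125, 173/250, 217/250], ?_, ?_⟩
  · intro i; fin_cases i <;> constructor <;> norm_num
  · rintro rs ⟨h0, h1⟩
    -- cuts: 0.029, 0.07, 0.116, 0.168, 0.225, 0.289, 1/3, 0.459, 0.633, 0.874, 1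
    by_cases c1 : rs ≤ 0.029
    · refine ⟨0, ?_⟩
      show Bfun 0 rs ≤ _
      exact key1 h0 (by linarith) h0 (by norm_num; linarith)
    push_neg at c1
    by_cases c2 : rs ≤ 0.07
    · refine ⟨1, ?_⟩
      show Bfun (19/500) rs ≤ _
      by_cases hr : (19:ℝ)/500 ≤ rs
      · exact key1 hr (by linarith) h0 (by norm_num; linarith)
      · exact key3 hr (by linarith) h0 (by push_neg at hr; norm_num; linarith)
    push_neg at c2
    by_cases c3 : rs ≤ 0.116
    · refine ⟨2, ?_⟩
      show Bfun (2/25) rs ≤ _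
      by_cases hr : (2:ℝ)/25 ≤ rs
      · exact key1 hr (by linarith) h0 (by norm_num; linarith)
      · exact key3 hr (by linarith) h0 (by push_neg at hr; norm_num; linarith)
    push_neg at c3
    by_cases c4 : rs ≤ 0.168
    · refine ⟨3, ?_⟩
      show Bfun (16/125) rs ≤ _
      by_cases hr : (16:ℝ)/125 ≤ rs
      · exact key1 hr (by linarith) h0 (by norm_num; linarith)
      · exact key3 hr (by linarith) h0 (by push_neg at hr; norm_num; linarith)
    push_neg at c4
    by_cases c5 : rs ≤ 0.225
    · refine ⟨4, ?_⟩
      show Bfun (181/1000) rs ≤ _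
      by_cases hr : (181:ℝ)/1000 ≤ rs
      · exact key1 hr (by linarith) h0 (by norm_num; linarith)
      · exact key3 hr (by linarith) h0 (by push_neg at hr; norm_num; linarith)
    push_neg at c5
    by_cases c6 : rs ≤ 0.289
    · refine ⟨5, ?_⟩
      show Bfun (239/1000) rs ≤ _
      by_cases hr : (239:ℝ)/1000 ≤ rs
      · exact key1 hr (by linarith) h0 (by norm_num; linarith)
      · exact key3 hr (by linarith) h0 (by push_neg at hr; norm_num; linarith)
    push_neg at c6
    by_cases c7 : rs ≤ 1/3
    · refine ⟨6, ?_⟩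
      show Bfun (61/200) rs ≤ _
      by_cases hr : (61:ℝ)/200 ≤ rs
      · exact key1 hr c7 h0 (by norm_num; linarith)
      · exact key3 hr c7 h0 (by push_neg at hr; norm_num; linarith)
    by_cases c8 : rs ≤ 0.418
    · refine ⟨7, ?_⟩
      show Bfun (351/1000) rs ≤ _
      push_neg at c7
      by_cases hr : (351:ℝ)/1000 ≤ rs
      · exact key2 hr (by intro h; linarith) (by norm_num; linarith)
      · exact key4 hr (by intro h; linarith) (by push_neg at hr; norm_num; linarith)
    push_neg at c7 c8
    by_cases c9 : rs ≤ 0.524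
    · refine ⟨8, ?_⟩
      show Bfun (11/25) rs ≤ _
      by_cases hr : (11:ℝ)/25 ≤ rs
      · exact key2 hr (by intro h; linarith) (by norm_num; linarith)
      · exact key4 hr (by intro h; linarith) (by push_neg at hr; norm_num; linarith)
    push_neg at c9
    by_cases c10 : rs ≤ 0.657
    · refine ⟨9, ?_⟩
      show Bfun (69/125) rs ≤ _
      by_cases hr : (69:ℝ)/125 ≤ rs
      · exact key2 hr (by intro h; linarith) (by norm_num; linarith)
      · exact key4 hr (by intro h; linarith) (by push_neg at hr; norm_num; linarith)
    push_neg at c10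
    by_cases c11 : rs ≤ 0.824
    · refine ⟨10, ?_⟩
      show Bfun (173/250) rs ≤ _
      by_cases hr : (173:ℝ)/250 ≤ rs
      · exact key2 hr (by intro h; linarith) (by norm_num; linarith)
      · exact key4 hr (by intro h; linarith) (by push_neg at hr; norm_num; linarith)
    push_neg at c11
    · refine ⟨11, ?_⟩
      show Bfun (217/250) rs ≤ _
      by_cases hr : (217:ℝ)/250 ≤ rs
      · exact key2 hr (by intro h; linarith) (by norm_num; linarith)
      · exact key4 hr (by intro h; linarith) (by push_neg at hr; norm_num; linarith)
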